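/- arXiv:2306.07973 — 3 statements merged into one kernel-verified Lean document; each statement's English description precedes it below -/
import Mathlib

section
/- For jointly distributed discrete random variables r and x with joint pmf p(r,x), and any conditional variational distribution q(x|r), the mutual information I(r;x) is upper bounded by the vCLUB estimator E_{p(r,x)}[log q(x|r)] - E_{p(r)p(x)}[log q(x|r)], provided that KL(p(r,x) || q(x|r)p(r)) ≤ KL(p(r)p(x) || q(x|r)p(r)). -/
/-- vCLUB is an upper bound of mutual information under the KL condition.
`p` is the joint pmf of `(r, x)`, `q r x` is the variational conditional `q(x|r)`,
`pr`/`px` are the marginals.  The hypothesis `hKL` is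
`KL(p(r,x) ‖ q(x|r)p(r)) ≤ KL(p(r)p(x) ‖ q(x|r)p(r))`, and the conclusion is
`I(r;x) ≤ I_vCLUB(r;x)`. -/
theorem vclub_upper_bound {R X : Type} [Fintype R] [Fintype X]
    (p : R → X → ℝ) (q : R → X → ℝ)
    (hp : ∀ r x, 0 < p r x) (hpsum : ∑ r, ∑ x, p r x = 1)
    (hq : ∀ r x, 0 < q r x) (hqsum : ∀ r, ∑ x, q r x = 1)
    (pr : R → ℝ) (px : X → ℝ)
    (hpr : ∀ r, pr r = ∑ x, p r x) (hpx : ∀ x, px x = ∑ r, p r x)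
    (hKL : ∑ r, ∑ x, p r x * Real.log (p r x / (q r x * pr r)) ≤
           ∑ r, ∑ x, pr r * px x * Real.log (pr r * px x / (q r x * pr r))) :
    ∑ r, ∑ x, p r x * Real.log (p r x / (pr r * px x)) ≤
      (∑ r, ∑ x, p r x * Real.log (q r x)) -
        ∑ r, ∑ x, pr r * px x * Real.log (q r x) := by
  haveI : Nonempty X := by
    by_contra h
    rw [not_nonempty_iff] at h
    simp at hpsum
  haveI : Nonempty R := by
    by_contra h
    rw [not_nonempty_iff] at h
    simp at hpsum
  have hprpos : ∀ r, 0 < pr r := fun r => by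
    rw [hpr]; exact Finset.sum_pos (fun x _ => hp r x) Finset.univ_nonempty
  have hpxpos : ∀ x, 0 < px x := fun x => by
    rw [hpx]; exact Finset.sum_pos (fun r _ => hp r x) Finset.univ_nonempty
  have hprsum : ∑ r, pr r = 1 := by
    simpa [hpr] using hpsum
  -- expand the logs
  have e1 : ∑ r, ∑ x, p r x * Real.log (p r x / (pr r * px x)) =
      (∑ r, ∑ x, p r x * Real.log (p r x)) - (∑ r, ∑ x, p r x * Real.log (pr r))
        - ∑ r, ∑ x, p r x * Real.log (px x) := by
    rw [← Finset.sum_sub_distrib, ← Finset.sum_sub_distrib]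
    refine Finset.sum_congr rfl fun r _ => ?_
    rw [← Finset.sum_sub_distrib, ← Finset.sum_sub_distrib]
    refine Finset.sum_congr rfl fun x _ => ?_
    rw [Real.log_div (hp r x).ne' (mul_pos (hprpos r) (hpxpos x)).ne',
      Real.log_mul (hprpos r).ne' (hpxpos x).ne']
    ring
  have e2 : ∑ r, ∑ x, p r x * Real.log (p r x / (q r x * pr r)) =
      (∑ r, ∑ x, p r x * Real.log (p r x)) - (∑ r, ∑ x, p r x * Real.log (q r x))
        - ∑ r, ∑ x, p r x * Real.log (pr r) := by
    rw [← Finset.sum_sub_distrib, ← Finset.sum_sub_distrib]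
    refine Finset.sum_congr rfl fun r _ => ?_
    rw [← Finset.sum_sub_distrib, ← Finset.sum_sub_distrib]
    refine Finset.sum_congr rfl fun x _ => ?_
    rw [Real.log_div (hp r x).ne' (mul_pos (hq r x) (hprpos r)).ne',
      Real.log_mul (hq r x).ne' (hprpos r).ne']
    ring
  have e3 : ∑ r, ∑ x, pr r * px x * Real.log (pr r * px x / (q r x * pr r)) =
      (∑ r, ∑ x, pr r * px x * Real.log (px x))
        - ∑ r, ∑ x, pr r * px x * Real.log (q r x) := by
    rw [← Finset.sum_sub_distrib]
    refine Finset.sum_congr rfl fun r _ => ?_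
    rw [← Finset.sum_sub_distrib]
    refine Finset.sum_congr rfl fun x _ => ?_
    rw [Real.log_div (mul_pos (hprpos r) (hpxpos x)).ne' (mul_pos (hq r x) (hprpos r)).ne',
      Real.log_mul (hprpos r).ne' (hpxpos x).ne',
      Real.log_mul (hq r x).ne' (hprpos r).ne']
    ring
  -- the two "log px" sums agree
  have e4 : ∑ r, ∑ x, p r x * Real.log (px x) =
      ∑ r, ∑ x, pr r * px x * Real.log (px x) := by
    rw [Finset.sum_comm]
    have l : ∀ x, ∑ r, p r x * Real.log (px x) = px x * Real.log (px x) := fun x => by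
      rw [← Finset.sum_mul, ← hpx]
    have r : ∑ r, ∑ x, pr r * px x * Real.log (px x)
        = ∑ r, pr r * ∑ x, px x * Real.log (px x) := by
      refine Finset.sum_congr rfl fun r _ => ?_
      rw [Finset.mul_sum]
      exact Finset.sum_congr rfl fun x _ => by ring
    rw [r, ← Finset.sum_mul, hprsum, one_mul]
    exact Finset.sum_congr rfl fun x _ => l x
  rw [e2, e3] at hKL
  rw [e1]
  linarith [hKL, e4]
end

section
/- For jointly distributed discrete random variables z and y and any conditional variational distribution q(y|z), the difference I_vCLUB(z;y) - I(z;y) equals KL(p(z)p(y) || q(y|z)p(z)) - KL(p(z,y) || q(y|z)p(z)). In particular, I(z;y) ≤ I_vCLUB(z;y) + E_{p(z)}[KL(p(·|z) || q(·|z))]. -/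
/-- `I_vCLUB(z;y) - I(z;y) = KL(p(z)p(y)‖q(y|z)p(z)) - KL(p(z,y)‖q(y|z)p(z))`,
and `I(z;y) ≤ I_vCLUB(z;y) + E_{p(z)}[KL(p(·|z)‖q(·|z))]`. -/
theorem vclub_gap_and_bound {Z Y : Type} [Fintype Z] [Fintype Y]
    (p : Z → Y → ℝ) (q : Z → Y → ℝ)
    (hp : ∀ z y, 0 < p z y) (hpsum : ∑ z, ∑ y, p z y = 1)
    (hq : ∀ z y, 0 < q z y) (hqsum : ∀ z, ∑ y, q z y = 1)
    (pz : Z → ℝ) (py : Y → ℝ)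
    (hpz : ∀ z, pz z = ∑ y, p z y) (hpy : ∀ y, py y = ∑ z, p z y)
    (I IvCLUB : ℝ)
    (hI : I = ∑ z, ∑ y, p z y * Real.log (p z y / (pz z * py y)))
    (hIv : IvCLUB = (∑ z, ∑ y, p z y * Real.log (q z y)) -
      ∑ z, ∑ y, pz z * py y * Real.log (q z y)) :
    (IvCLUB - I =
      (∑ z, ∑ y, pz z * py y * Real.log (pz z * py y / (q z y * pz z))) -
        ∑ z, ∑ y, p z y * Real.log (p z y / (q z y * pz z))) ∧
    I ≤ IvCLUB +
      ∑ z, pz z * ∑ y, (p z y / pz z) * Real.log ((p z y / pz z) / q z y) := by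
  haveI hYne : Nonempty Y := by
    by_contra h
    rw [not_nonempty_iff] at h
    simp at hpsum
  haveI hZne : Nonempty Z := by
    by_contra h
    rw [not_nonempty_iff] at h
    simp at hpsum
  have hpz0 : ∀ z, 0 < pz z := fun z => by
    rw [hpz]; exact Finset.sum_pos (fun y _ => hp z y) Finset.univ_nonempty
  have hpy0 : ∀ y, 0 < py y := fun y => by
    rw [hpy]; exact Finset.sum_pos (fun z _ => hp z y) Finset.univ_nonempty
  have hsumpz : ∑ z, pz z = 1 := by simp_rw [hpz]; exact hpsum
  have hsumpy : ∑ y, py y = 1 := by simp_rw [hpy]; rw [Finset.sum_comm]; exact hpsum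
  -- d = ∑∑ p log py  equals  S := ∑ py log py
  have hd : ∑ z, ∑ y, p z y * Real.log (py y) = ∑ y, py y * Real.log (py y) := by
    rw [Finset.sum_comm]
    refine Finset.sum_congr rfl fun y _ => ?_
    rw [← Finset.sum_mul, ← hpy]
  -- g = ∑∑ pz py log py equals S
  have hg : ∑ z, ∑ y, pz z * py y * Real.log (py y) = ∑ y, py y * Real.log (py y) := by
    have h1 : ∀ z, ∑ y, pz z * py y * Real.log (py y)
        = pz z * ∑ y, py y * Real.log (py y) := by
      intro z
      rw [Finset.mul_sum]
      exact Finset.sum_congr rfl fun y _ => by ring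
    simp_rw [h1]
    rw [← Finset.sum_mul, hsumpz, one_mul]
  -- Expansion of the first KL sum: A = g - e
  have hA : (∑ z, ∑ y, pz z * py y * Real.log (pz z * py y / (q z y * pz z)))
      = (∑ z, ∑ y, pz z * py y * Real.log (py y))
        - ∑ z, ∑ y, pz z * py y * Real.log (q z y) := by
    rw [← Finset.sum_sub_distrib]
    refine Finset.sum_congr rfl fun z _ => ?_
    rw [← Finset.sum_sub_distrib]
    refine Finset.sum_congr rfl fun y _ => ?_
    have hq' : pz z * py y / (q z y * pz z) = py y / q z y := by
      rw [mul_comm (pz z) (py y), mul_div_mul_right _ _ (hpz0 z).ne']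
    rw [hq', Real.log_div (hpy0 y).ne' (hq z y).ne']
    ring
  -- Expansion of the second KL sum: B = a - b - c
  have hB : (∑ z, ∑ y, p z y * Real.log (p z y / (q z y * pz z)))
      = (∑ z, ∑ y, p z y * Real.log (p z y))
        - (∑ z, ∑ y, p z y * Real.log (q z y))
        - ∑ z, ∑ y, p z y * Real.log (pz z) := by
    rw [← Finset.sum_sub_distrib, ← Finset.sum_sub_distrib]
    refine Finset.sum_congr rfl fun z _ => ?_
    rw [← Finset.sum_sub_distrib, ← Finset.sum_sub_distrib]
    refine Finset.sum_congr rfl fun y _ => ?_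
    rw [Real.log_div (hp z y).ne' (mul_pos (hq z y) (hpz0 z)).ne',
      Real.log_mul (hq z y).ne' (hpz0 z).ne']
    ring
  -- Expansion of I: I = a - c - d
  have hIeq : I = (∑ z, ∑ y, p z y * Real.log (p z y))
      - (∑ z, ∑ y, p z y * Real.log (pz z))
      - ∑ z, ∑ y, p z y * Real.log (py y) := by
    rw [hI, ← Finset.sum_sub_distrib, ← Finset.sum_sub_distrib]
    refine Finset.sum_congr rfl fun z _ => ?_
    rw [← Finset.sum_sub_distrib, ← Finset.sum_sub_distrib]
    refine Finset.sum_congr rfl fun y _ => ?_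
    rw [Real.log_div (hp z y).ne' (mul_pos (hpz0 z) (hpy0 y)).ne',
      Real.log_mul (hpz0 z).ne' (hpy0 y).ne']
    ring
  -- Expansion of the expected KL term: E = a - b - c
  have hE : (∑ z, pz z * ∑ y, (p z y / pz z) * Real.log ((p z y / pz z) / q z y))
      = (∑ z, ∑ y, p z y * Real.log (p z y))
        - (∑ z, ∑ y, p z y * Real.log (q z y))
        - ∑ z, ∑ y, p z y * Real.log (pz z) := by
    rw [← Finset.sum_sub_distrib, ← Finset.sum_sub_distrib]
    refine Finset.sum_congr rfl fun z _ => ?_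
    rw [Finset.mul_sum, ← Finset.sum_sub_distrib, ← Finset.sum_sub_distrib]
    refine Finset.sum_congr rfl fun y _ => ?_
    have hdiv : 0 < p z y / pz z := div_pos (hp z y) (hpz0 z)
    rw [Real.log_div hdiv.ne' (hq z y).ne', Real.log_div (hp z y).ne' (hpz0 z).ne']
    field_simp [(hpz0 z).ne']
    ring
  -- Gibbs inequality: e ≤ g
  have hterm : ∀ z y, pz z * (py y - q z y)
      ≤ pz z * py y * Real.log (py y) - pz z * py y * Real.log (q z y) := by
    intro z y
    have hlog : Real.log (q z y) - Real.log (py y) ≤ q z y / py y - 1 := by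
      rw [← Real.log_div (hq z y).ne' (hpy0 y).ne']
      exact Real.log_le_sub_one_of_pos (div_pos (hq z y) (hpy0 y))
    have h2 : py y * (Real.log (q z y) - Real.log (py y)) ≤ q z y - py y := by
      have h3 := mul_le_mul_of_nonneg_left hlog (le_of_lt (hpy0 y))
      have hpy' : py y * (q z y / py y) = q z y := by
        rw [mul_comm]; exact div_mul_cancel₀ _ (hpy0 y).ne'
      nlinarith [hpy0 y]
    nlinarith [hpz0 z]
  have hge : (∑ z, ∑ y, pz z * py y * Real.log (q z y))
      ≤ ∑ z, ∑ y, pz z * py y * Real.log (py y) := by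
    have hzero : ∑ z, ∑ y, pz z * (py y - q z y) = 0 := by
      refine Finset.sum_eq_zero fun z _ => ?_
      rw [← Finset.mul_sum, Finset.sum_sub_distrib, hsumpy, hqsum z, sub_self, mul_zero]
    have hle : ∑ z, ∑ y, pz z * (py y - q z y)
        ≤ ∑ z, ∑ y, (pz z * py y * Real.log (py y) - pz z * py y * Real.log (q z y)) :=
      Finset.sum_le_sum fun z _ => Finset.sum_le_sum fun y _ => hterm z y
    rw [hzero] at hle
    simp_rw [Finset.sum_sub_distrib] at hle
    linarith
  constructor
  · rw [hIv, hIeq, hA, hB]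
    have := hd
    have := hg
    linarith
  · rw [hIv, hIeq, hE]
    have := hd
    have := hg
    linarith
end

section
/- For discrete random variables z and y with strictly positive joint pmf, the inequality I(z;y) ≤ I_vCLUB(z;y) holds whenever KL(p(z,y) || q(y|z)p(z)) ≤ KL(p(z)p(y) || q(y|z)p(z)); moreover, the condition KL(p(z,y) || q(y|z)p(z)) being minimized over q is equivalent to maximizing E_{p(z,y)}[log q(y|z)]. -/
/-- (a) `I(z;y) ≤ I_vCLUB(z;y)` whenever
`KL(p(z,y) ‖ q(y|z)p(z)) ≤ KL(p(z)p(y) ‖ q(y|z)p(z))`; (b)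
`KL(p(z,y) ‖ q(y|z)p(z)) = E_{p(z,y)}[log p(y|z)] - E_{p(z,y)}[log q(y|z)]`, so
minimizing this KL over `q` is equivalent to maximizing `E_{p(z,y)}[log q(y|z)]`. -/
theorem vclub_condition_and_equivalence {Z Y : Type} [Fintype Z] [Fintype Y]
    (p : Z → Y → ℝ) (hp : ∀ z y, 0 < p z y) (hpsum : ∑ z, ∑ y, p z y = 1)
    (pz : Z → ℝ) (py : Y → ℝ)
    (hpz : ∀ z, pz z = ∑ y, p z y) (hpy : ∀ y, py y = ∑ z, p z y)
    (q : Z → Y → ℝ) (hq : ∀ z y, 0 < q z y) (hqsum : ∀ z, ∑ y, q z y = 1) :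
    ((∑ z, ∑ y, p z y * Real.log (p z y / (q z y * pz z)) ≤
        ∑ z, ∑ y, pz z * py y * Real.log (pz z * py y / (q z y * pz z))) →
      ∑ z, ∑ y, p z y * Real.log (p z y / (pz z * py y)) ≤
        (∑ z, ∑ y, p z y * Real.log (q z y)) -
          ∑ z, ∑ y, pz z * py y * Real.log (q z y)) ∧
    (∑ z, ∑ y, p z y * Real.log (p z y / (q z y * pz z)) =
      (∑ z, ∑ y, p z y * Real.log (p z y / pz z)) -
        ∑ z, ∑ y, p z y * Real.log (q z y)) ∧
    (∀ q₁ q₂ : Z → Y → ℝ, (∀ z y, 0 < q₁ z y) → (∀ z y, 0 < q₂ z y) →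
      ((∑ z, ∑ y, p z y * Real.log (p z y / (q₁ z y * pz z)) ≤
          ∑ z, ∑ y, p z y * Real.log (p z y / (q₂ z y * pz z))) ↔
        (∑ z, ∑ y, p z y * Real.log (q₂ z y)) ≤
          ∑ z, ∑ y, p z y * Real.log (q₁ z y))) := by
  have hYne : (Finset.univ : Finset Y).Nonempty := by
    by_contra h
    rw [Finset.not_nonempty_iff_eq_empty] at h
    simp only [h, Finset.sum_empty, Finset.sum_const_zero] at hpsum
    norm_num at hpsum
  have hZne : (Finset.univ : Finset Z).Nonempty := by
    by_contra h
    rw [Finset.not_nonempty_iff_eq_empty] at h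
    simp only [h, Finset.sum_empty] at hpsum
    norm_num at hpsum
  have hpz0 : ∀ z, 0 < pz z := fun z => by
    rw [hpz]; exact Finset.sum_pos (fun y _ => hp z y) hYne
  have hpy0 : ∀ y, 0 < py y := fun y => by
    rw [hpy]; exact Finset.sum_pos (fun z _ => hp z y) hZne
  have hpzsum : ∑ z, pz z = 1 := by
    rw [← hpsum]; exact Finset.sum_congr rfl fun z _ => hpz z
  -- key identity (b), for arbitrary positive q'
  have key : ∀ q' : Z → Y → ℝ, (∀ z y, 0 < q' z y) →
      ∑ z, ∑ y, p z y * Real.log (p z y / (q' z y * pz z)) =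
        (∑ z, ∑ y, p z y * Real.log (p z y / pz z)) -
          ∑ z, ∑ y, p z y * Real.log (q' z y) := by
    intro q' hq'
    rw [← Finset.sum_sub_distrib]
    refine Finset.sum_congr rfl fun z _ => ?_
    rw [← Finset.sum_sub_distrib]
    refine Finset.sum_congr rfl fun y _ => ?_
    rw [Real.log_div (hp z y).ne' (mul_pos (hq' z y) (hpz0 z)).ne',
      Real.log_mul (hq' z y).ne' (hpz0 z).ne',
      Real.log_div (hp z y).ne' (hpz0 z).ne']
    ring
  refine ⟨?_, key q hq, ?_⟩
  · intro hcond
    -- rewrite KL2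
    have hKL2 : ∑ z, ∑ y, pz z * py y * Real.log (pz z * py y / (q z y * pz z)) =
        (∑ z, ∑ y, pz z * py y * Real.log (py y)) -
          ∑ z, ∑ y, pz z * py y * Real.log (q z y) := by
      rw [← Finset.sum_sub_distrib]
      refine Finset.sum_congr rfl fun z _ => ?_
      rw [← Finset.sum_sub_distrib]
      refine Finset.sum_congr rfl fun y _ => ?_
      rw [Real.log_div (mul_pos (hpz0 z) (hpy0 y)).ne' (mul_pos (hq z y) (hpz0 z)).ne',
        Real.log_mul (hpz0 z).ne' (hpy0 y).ne',
        Real.log_mul (hq z y).ne' (hpz0 z).ne']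
      ring
    -- rewrite I
    have hI : ∑ z, ∑ y, p z y * Real.log (p z y / (pz z * py y)) =
        (∑ z, ∑ y, p z y * Real.log (p z y / (q z y * pz z))) +
          (∑ z, ∑ y, p z y * Real.log (q z y)) -
            ∑ z, ∑ y, p z y * Real.log (py y) := by
      rw [← Finset.sum_add_distrib, ← Finset.sum_sub_distrib]
      refine Finset.sum_congr rfl fun z _ => ?_
      rw [← Finset.sum_add_distrib, ← Finset.sum_sub_distrib]
      refine Finset.sum_congr rfl fun y _ => ?_
      rw [Real.log_div (hp z y).ne' (mul_pos (hpz0 z) (hpy0 y)).ne',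
        Real.log_mul (hpz0 z).ne' (hpy0 y).ne',
        Real.log_div (hp z y).ne' (mul_pos (hq z y) (hpz0 z)).ne',
        Real.log_mul (hq z y).ne' (hpz0 z).ne']
      ring
    -- ∑∑ p * log py = ∑∑ pz*py*log py
    have hC : ∑ z, ∑ y, p z y * Real.log (py y) =
        ∑ z, ∑ y, pz z * py y * Real.log (py y) := by
      rw [Finset.sum_comm]
      have h1 : ∑ y, ∑ z, p z y * Real.log (py y) = ∑ y, py y * Real.log (py y) := by
        refine Finset.sum_congr rfl fun y _ => ?_
        rw [← Finset.sum_mul, ← hpy]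
      have h2 : ∑ z, ∑ y, pz z * py y * Real.log (py y) =
          ∑ z, pz z * ∑ y, py y * Real.log (py y) := by
        refine Finset.sum_congr rfl fun z _ => ?_
        rw [Finset.mul_sum]
        exact Finset.sum_congr rfl fun y _ => by ring
      rw [h1, h2, ← Finset.sum_mul, hpzsum, one_mul]
    rw [hKL2] at hcond
    rw [hI]
    linarith [hcond, hC]
  · intro q₁ q₂ hq₁ hq₂
    rw [key q₁ hq₁, key q₂ hq₂]
    constructor <;> intro h <;> linarith
end
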